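/- arXiv:1605.04601 — 2 statements merged into one kernel-verified Lean document; each statement's English description precedes it below -/
import Mathlib

section
/- Let ρ and σ be density operators on a finite-dimensional Hilbert space, let 0 < α < 1, and suppose the purified distance between αρ and ασ (as subnormalized states) is at most ε. Then the purified distance between ρ and σ is at most ε·√(2/α). -/
open Matrix
open scoped ComplexOrder Classical

/-- Square root of a positive semidefinite matrix (junk value `0` otherwise). -/
noncomputable def matSqrt {n : Type*} [Fintype n] [DecidableEq n]
    (A : Matrix n n ℂ) : Matrix n n ℂ :=
  if h : A.PosSemidef then
    (h.1.eigenvectorUnitary : Matrix n n ℂ) *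
      diagonal (((↑) : ℝ → ℂ) ∘ (Real.sqrt ·) ∘ h.1.eigenvalues) *
      (star h.1.eigenvectorUnitary : Matrix n n ℂ)
  else 0

/-- Trace norm `‖M‖₁ = Tr √(Mᴴ M)`. -/
noncomputable def traceNorm {n : Type*} [Fintype n] [DecidableEq n]
    (M : Matrix n n ℂ) : ℝ :=
  (matSqrt (Mᴴ * M)).trace.re

/-- Fidelity `‖√ρ √σ‖₁`. -/
noncomputable def fidelity {n : Type*} [Fintype n] [DecidableEq n]
    (ρ σ : Matrix n n ℂ) : ℝ :=
  traceNorm (matSqrt ρ * matSqrt σ)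

/-- Generalized fidelity of subnormalized states. -/
noncomputable def genFidelity {n : Type*} [Fintype n] [DecidableEq n]
    (ρ σ : Matrix n n ℂ) : ℝ :=
  fidelity ρ σ + Real.sqrt ((1 - ρ.trace.re) * (1 - σ.trace.re))

/-- Purified distance `P(ρ,σ) = √(1 - F(ρ,σ)²)`. -/
noncomputable def purifiedDist {n : Type*} [Fintype n] [DecidableEq n]
    (ρ σ : Matrix n n ℂ) : ℝ :=
  Real.sqrt (1 - (genFidelity ρ σ) ^ 2)

/-! Scaling both states by `α` multiplies `‖√ρ√σ‖₁` by `α` and leaves a trace deficit `1 - α` on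
each, so for normalized states `F(αρ, ασ) = α F + (1 - α)` with `F = F(ρ, σ)`. Hence
`1 - F(αρ, ασ)² ≥ 1 - F(αρ, ασ) = α (1 - F) ≥ α (1 - F²) / 2`. -/

section

variable {n : Type*} [Fintype n] [DecidableEq n]

lemma matSqrt_eq_cfc {A : Matrix n n ℂ} (hA : A.PosSemidef) : matSqrt A = cfc Real.sqrt A := by
  rw [matSqrt, dif_pos hA, hA.1.cfc_eq, IsHermitian.cfc, Unitary.conjStarAlgAut_apply]
  rfl

lemma posSemidef_matSqrt (A : Matrix n n ℂ) : (matSqrt A).PosSemidef := by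
  by_cases hA : A.PosSemidef
  · rw [matSqrt, dif_pos hA, star_eq_conjTranspose]
    refine PosSemidef.mul_mul_conjTranspose_same (posSemidef_diagonal_iff.2 fun i => ?_) _
    simp [Real.sqrt_nonneg]
  · rw [matSqrt, dif_neg hA]
    exact PosSemidef.zero

lemma matSqrt_smul (A : Matrix n n ℂ) {c : ℝ} (hc : 0 ≤ c) :
    matSqrt (c • A) = √c • matSqrt A := by
  rcases hc.eq_or_lt with rfl | hc
  · rw [zero_smul, Real.sqrt_zero, zero_smul, matSqrt_eq_cfc PosSemidef.zero, cfc_apply_zero,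
      Real.sqrt_zero, map_zero]
  by_cases hA : A.PosSemidef
  · have hcA : (c • A).PosSemidef := hA.smul hc.le
    rw [matSqrt_eq_cfc hcA, matSqrt_eq_cfc hA, ← cfc_const_mul (√c) Real.sqrt A]
    refine (cfc_comp_smul c Real.sqrt A (ha := hA.1)).symm.trans (congrArg (cfc · A) ?_)
    funext x
    rw [smul_eq_mul, Real.sqrt_mul hc.le]
  -- outside the positive semidefinite cone both sides are the junk value `0`
  · have hcA : ¬ (c • A).PosSemidef := fun h => hA <| by
      simpa [smul_smul, inv_mul_cancel₀ hc.ne'] using h.smul (inv_nonneg.2 hc.le)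
    rw [matSqrt, dif_neg hcA, matSqrt, dif_neg hA, smul_zero]

lemma traceNorm_nonneg (M : Matrix n n ℂ) : 0 ≤ traceNorm M :=
  (Complex.le_def.1 (posSemidef_matSqrt _).trace_nonneg).1

lemma traceNorm_smul (M : Matrix n n ℂ) {c : ℝ} (hc : 0 ≤ c) :
    traceNorm (c • M) = c * traceNorm M := by
  have hsq : (c • M)ᴴ * (c • M) = (c * c) • (Mᴴ * M) := by
    rw [conjTranspose_smul, star_trivial, smul_mul_smul_comm]
  rw [traceNorm, traceNorm, hsq, matSqrt_smul _ (mul_self_nonneg c), Real.sqrt_mul_self hc,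
    trace_smul, Complex.smul_re, smul_eq_mul]

lemma fidelity_smul (ρ σ : Matrix n n ℂ) {c : ℝ} (hc : 0 ≤ c) :
    fidelity (c • ρ) (c • σ) = c * fidelity ρ σ := by
  rw [fidelity, matSqrt_smul ρ hc, matSqrt_smul σ hc, smul_mul_smul_comm, Real.mul_self_sqrt hc,
    traceNorm_smul _ hc, fidelity]

lemma genFidelity_smul_of_trace_eq_one {ρ σ : Matrix n n ℂ} (hρ1 : ρ.trace = 1)
    (hσ1 : σ.trace = 1) {α : ℝ} (hα0 : 0 ≤ α) (hα1 : α ≤ 1) :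
    genFidelity (α • ρ) (α • σ) = α * fidelity ρ σ + (1 - α) := by
  rw [genFidelity, fidelity_smul ρ σ hα0, trace_smul, trace_smul, hρ1, hσ1, Complex.smul_re,
    Complex.one_re, smul_eq_mul, mul_one, Real.sqrt_mul_self (sub_nonneg.2 hα1)]

lemma genFidelity_of_trace_eq_one {ρ σ : Matrix n n ℂ} (hρ1 : ρ.trace = 1)
    (hσ1 : σ.trace = 1) : genFidelity ρ σ = fidelity ρ σ := by
  simpa using genFidelity_smul_of_trace_eq_one hρ1 hσ1 zero_le_one le_rfl

lemma sqrt_one_sub_sq_le_sqrt_one_sub_sq_mix_mul {F α : ℝ} (hF : 0 ≤ F) (hα0 : 0 < α)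
    (hα1 : α ≤ 1) :
    √(1 - F ^ 2) ≤ √(1 - (α * F + (1 - α)) ^ 2) * √(2 / α) := by
  rcases le_or_gt 1 F with hF1 | hF1
  · rw [Real.sqrt_eq_zero_of_nonpos (by nlinarith)]
    positivity
  rw [← Real.sqrt_mul' _ (by positivity)]
  refine Real.sqrt_le_sqrt ?_
  rw [mul_div_assoc', le_div_iff₀ hα0]
  have hgap : 0 < α * (1 - F) := mul_pos hα0 (sub_pos.2 hF1)
  nlinarith [mul_nonneg (mul_nonneg hgap.le (sub_pos.2 hF1).le) (sub_nonneg.2 hα1),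
    mul_nonneg hgap.le hF, mul_nonneg hgap.le (sub_pos.2 hF1).le]

end

theorem purifiedDist_of_smul_general {n : Type*} [Fintype n] [DecidableEq n]
    (ρ σ : Matrix n n ℂ) (hρ1 : ρ.trace = 1)
    (hσ1 : σ.trace = 1)
    (α ε : ℝ) (hα0 : 0 < α) (hα1 : α < 1)
    (h : purifiedDist (α • ρ) (α • σ) ≤ ε) :
    purifiedDist ρ σ ≤ ε * Real.sqrt (2 / α) := by
  rw [purifiedDist, genFidelity_of_trace_eq_one hρ1 hσ1]
  rw [purifiedDist, genFidelity_smul_of_trace_eq_one hρ1 hσ1 hα0.le hα1.le] at h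
  calc √(1 - fidelity ρ σ ^ 2)
      ≤ √(1 - (α * fidelity ρ σ + (1 - α)) ^ 2) * √(2 / α) :=
        sqrt_one_sub_sq_le_sqrt_one_sub_sq_mix_mul (traceNorm_nonneg _) hα0 hα1.le
    _ ≤ ε * √(2 / α) := by gcongr

theorem purifiedDist_of_smul {n : Type*} [Fintype n] [DecidableEq n]
    (ρ σ : Matrix n n ℂ) (hρ : ρ.PosSemidef) (hρ1 : ρ.trace = 1)
    (hσ : σ.PosSemidef) (hσ1 : σ.trace = 1)
    (α ε : ℝ) (hα0 : 0 < α) (hα1 : α < 1)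
    (h : purifiedDist (α • ρ) (α • σ) ≤ ε) :
    purifiedDist ρ σ ≤ ε * Real.sqrt (2 / α) :=
  purifiedDist_of_smul_general ρ σ hρ1 hσ1 α ε hα0 hα1 h
end

section
/- Let ρ_{AB} = ∑_j p(j) |j⟩⟨j|_A ⊗ σ^j_B be a classical-quantum state on H_A ⊗ H_B, where {|j⟩} is an orthonormal basis of H_A, p is a probability distribution, and each σ^j_B is a density operator. Then the max-information satisfies I_max(A:B)_ρ ≤ log₂(dim H_B). -/
open Matrix
open scoped ComplexOrder Classical Kronecker

/-- Partial trace over the second (right) tensor factor. -/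
noncomputable def ptrR {m n : Type*} [Fintype m] [Fintype n]
    (ρ : Matrix (m × n) (m × n) ℂ) : Matrix m m ℂ :=
  Matrix.of fun a a' => ∑ b, ρ (a, b) (a', b)

/-- Max-relative entropy `D_max(ρ‖σ) = inf {λ : ρ ≤ 2^λ σ}` (Löwner order). -/
noncomputable def dmax {n : Type*} [Fintype n] (ρ σ : Matrix n n ℂ) : ℝ :=
  sInf {l : ℝ | ((2 : ℝ) ^ l • σ - ρ).PosSemidef}

/-- Max-information `I_max(A:B)_ρ = inf_{σ_B} D_max(ρ_{AB} ‖ ρ_A ⊗ σ_B)`. -/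
noncomputable def Imax {α β : Type*} [Fintype α] [Fintype β]
    (ρ : Matrix (α × β) (α × β) ℂ) : ℝ :=
  sInf {x : ℝ | ∃ τ : Matrix β β ℂ, τ.PosSemidef ∧ τ.trace = 1 ∧
    x = dmax ρ (ptrR ρ ⊗ₖ τ)}

/-!
The maximally mixed state `I/d` is a feasible `σ_B`. Because every `σʲ` has unit trace,
`ρ_A = ∑ⱼ p(j) |j⟩⟨j|`, so `d · ρ_A ⊗ I/d - ρ_AB = ∑ⱼ p(j) |j⟩⟨j| ⊗ (I - σʲ)`. Each `I - σʲ` is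
positive semidefinite since the eigenvalues of a density operator sum to one, hence are at most
one. Thus `ρ_AB ≤ 2^{log₂ d} ρ_A ⊗ I/d`, i.e. `D_max(ρ_AB ‖ ρ_A ⊗ I/d) ≤ log₂ d`.
-/

namespace Matrix

theorem PosSemidef.trace_smul_one_sub {𝕜 n : Type*} [RCLike 𝕜] [Fintype n] [DecidableEq n]
    {M : Matrix n n 𝕜} (hM : M.PosSemidef) : (M.trace • 1 - M).PosSemidef := by
  refine posSemidef_iff_isHermitian_and_spectrum_nonneg.mpr
    ⟨((IsSelfAdjoint.of_nonneg hM.trace_nonneg).smul (IsSelfAdjoint.one _)).sub hM.1, ?_⟩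
  rw [← Algebra.algebraMap_eq_smul_one, ← spectrum.singleton_sub_eq,
    hM.1.spectrum_eq_image_range]
  rintro _ ⟨_, rfl, _, ⟨_, ⟨i, rfl⟩, rfl⟩, rfl⟩
  rw [Set.mem_ofPred_eq, hM.1.trace_eq_sum_eigenvalues, sub_nonneg]
  exact_mod_cast Finset.single_le_sum (fun j _ => hM.eigenvalues_nonneg j) (Finset.mem_univ i)

theorem PosSemidef.one_sub_of_trace_eq_one {𝕜 n : Type*} [RCLike 𝕜] [Fintype n] [DecidableEq n]
    {M : Matrix n n 𝕜} (hM : M.PosSemidef) (htr : M.trace = 1) : (1 - M).PosSemidef := by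
  simpa [htr] using hM.trace_smul_one_sub

theorem posSemidef_single_one {n R : Type*} [Fintype n] [DecidableEq n] [CommRing R]
    [PartialOrder R] [StarRing R] [StarOrderedRing R] (j : n) :
    (single j j (1 : R)).PosSemidef := by
  rw [← diagonal_single]
  exact .diagonal (Pi.single_nonneg.mpr zero_le_one)

end Matrix

section PartialTrace

variable {m n : Type*} [Fintype m] [Fintype n]

theorem trace_ptrR (ρ : Matrix (m × n) (m × n) ℂ) : (ptrR ρ).trace = ρ.trace := by
  simp [ptrR, Matrix.trace, Fintype.sum_prod_type]

theorem ptrR_kronecker (A : Matrix m m ℂ) (B : Matrix n n ℂ) :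
    ptrR (A ⊗ₖ B) = B.trace • A := by
  ext a a'
  simp [ptrR, Matrix.trace, Finset.mul_sum, mul_comm]

theorem ptrR_sum {ι : Type*} (s : Finset ι) (ρ : ι → Matrix (m × n) (m × n) ℂ) :
    ptrR (∑ i ∈ s, ρ i) = ∑ i ∈ s, ptrR (ρ i) := by
  ext a a'
  simp [ptrR, Matrix.sum_apply, Finset.sum_comm (γ := n)]

theorem ptrR_smul {R : Type*} [DistribSMul R ℂ] (c : R) (ρ : Matrix (m × n) (m × n) ℂ) :
    ptrR (c • ρ) = c • ptrR ρ := by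
  ext a a'
  simp [ptrR, Finset.smul_sum]

end PartialTrace

section MaxEntropy

variable {n : Type*} [Fintype n] {ρ σ : Matrix n n ℂ}

theorem nonneg_of_posSemidef_two_rpow_smul_sub (hρ : ρ.trace = 1) (hσ : σ.trace = 1) {l : ℝ}
    (h : ((2 : ℝ) ^ l • σ - ρ).PosSemidef) : 0 ≤ l := by
  have htr := h.trace_nonneg
  rw [trace_sub, trace_smul, hρ, hσ, Complex.real_smul, mul_one, sub_nonneg,
    ← Complex.ofReal_one, Complex.real_le_real] at htr
  exact (Real.rpow_le_rpow_left_iff one_lt_two).mp (by rwa [Real.rpow_zero])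

theorem dmax_le (hρ : ρ.trace = 1) (hσ : σ.trace = 1) {l : ℝ}
    (h : ((2 : ℝ) ^ l • σ - ρ).PosSemidef) : dmax ρ σ ≤ l :=
  csInf_le ⟨0, fun _ => nonneg_of_posSemidef_two_rpow_smul_sub hρ hσ⟩ h

theorem dmax_nonneg (hρ : ρ.trace = 1) (hσ : σ.trace = 1) : 0 ≤ dmax ρ σ :=
  Real.sInf_nonneg fun _ => nonneg_of_posSemidef_two_rpow_smul_sub hρ hσ

end MaxEntropy

section MaxInformation

variable {α β : Type*} [Fintype α] [Fintype β]

theorem trace_ptrR_kronecker {ρ : Matrix (α × β) (α × β) ℂ} (hρ : ρ.trace = 1)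
    {τ : Matrix β β ℂ} (hτ1 : τ.trace = 1) : (ptrR ρ ⊗ₖ τ).trace = 1 := by
  rw [trace_kronecker, trace_ptrR, hρ, hτ1, one_mul]

theorem Imax_le_dmax {ρ : Matrix (α × β) (α × β) ℂ} (hρ : ρ.trace = 1) {τ : Matrix β β ℂ}
    (hτ : τ.PosSemidef) (hτ1 : τ.trace = 1) : Imax ρ ≤ dmax ρ (ptrR ρ ⊗ₖ τ) := by
  refine csInf_le ⟨0, ?_⟩ ⟨τ, hτ, hτ1, rfl⟩
  rintro _ ⟨τ', -, hτ'1, rfl⟩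
  exact dmax_nonneg hρ (trace_ptrR_kronecker hρ hτ'1)

theorem Imax_of_isEmpty [IsEmpty β] (ρ : Matrix (α × β) (α × β) ℂ) : Imax ρ = 0 := by
  simp [Imax]

end MaxInformation

section ClassicalQuantum

variable {α β : Type*} [Fintype α] [Fintype β] [DecidableEq α]

noncomputable def cqState (p : α → ℝ) (σ : α → Matrix β β ℂ) : Matrix (α × β) (α × β) ℂ :=
  ∑ j, p j • (single j j (1 : ℂ) ⊗ₖ σ j)

variable {p : α → ℝ} {σ : α → Matrix β β ℂ}

theorem ptrR_cqState (hσ : ∀ j, (σ j).trace = 1) :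
    ptrR (cqState p σ) = ∑ j, p j • single j j (1 : ℂ) := by
  simp [cqState, ptrR_sum, ptrR_smul, ptrR_kronecker, hσ]

theorem trace_cqState (hp1 : ∑ j, p j = 1) (hσ : ∀ j, (σ j).trace = 1) :
    (cqState p σ).trace = 1 := by
  rw [← trace_ptrR, ptrR_cqState hσ]
  simp [trace_sum, ← Complex.ofReal_sum, hp1]

theorem posSemidef_cqState (hp : ∀ j, 0 ≤ p j) (hσ : ∀ j, (σ j).PosSemidef) :
    (cqState p σ).PosSemidef :=
  posSemidef_sum _ fun j _ => ((posSemidef_single_one j).kronecker (hσ j)).smul (hp j)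

theorem ptrR_cqState_kronecker_one_sub [DecidableEq β] (hσ : ∀ j, (σ j).trace = 1) :
    ptrR (cqState p σ) ⊗ₖ 1 - cqState p σ = cqState p (1 - σ) := by
  rw [ptrR_cqState hσ]
  ext ⟨a, b⟩ ⟨a', b'⟩
  simp [cqState, Matrix.sum_apply, Matrix.single_apply, Finset.sum_mul, mul_sub,
    ← Finset.sum_sub_distrib]

end ClassicalQuantum

/-- For a classical-quantum state `ρ_{AB} = ∑ⱼ p(j) |j⟩⟨j| ⊗ σʲ`,
`I_max(A:B)_ρ ≤ log₂ dim(H_B)`. -/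
theorem Imax_cq_le {α β : Type*} [Fintype α] [Fintype β] [DecidableEq α] [DecidableEq β]
    (p : α → ℝ) (hp : ∀ j, 0 ≤ p j) (hp1 : ∑ j, p j = 1)
    (σ : α → Matrix β β ℂ)
    (hσ : ∀ j, (σ j).PosSemidef ∧ (σ j).trace = 1) :
    Imax (∑ j, p j • (Matrix.single j j (1 : ℂ) ⊗ₖ σ j))
      ≤ Real.logb 2 (Fintype.card β) := by
  change Imax (cqState p σ) ≤ _
  set ρ := cqState p σ
  rcases isEmpty_or_nonempty β with _ | _
  · simp [Imax_of_isEmpty]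
  have hd : (0 : ℝ) < Fintype.card β := by exact_mod_cast Fintype.card_pos
  set τ : Matrix β β ℂ := (Fintype.card β : ℝ)⁻¹ • 1
  have hτ : τ.PosSemidef := PosSemidef.one.smul (inv_nonneg.mpr hd.le)
  have hτ1 : τ.trace = 1 := by simp [τ, Complex.real_smul]
  have hρ1 : ρ.trace = 1 := trace_cqState hp1 fun j => (hσ j).2
  calc Imax ρ ≤ dmax ρ (ptrR ρ ⊗ₖ τ) := Imax_le_dmax hρ1 hτ hτ1
    _ ≤ Real.logb 2 (Fintype.card β) := by
      refine dmax_le hρ1 (trace_ptrR_kronecker hρ1 hτ1) ?_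
      rw [Real.rpow_logb two_pos (by norm_num) hd, kronecker_smul, smul_smul,
        mul_inv_cancel₀ hd.ne', one_smul, ptrR_cqState_kronecker_one_sub fun j => (hσ j).2]
      exact posSemidef_cqState hp fun j => (hσ j).1.one_sub_of_trace_eq_one (hσ j).2
end
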